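/- No on-line algorithm for scheduling precedence-constrained tasks on m CPUs and k GPUs (with sqrt(m/k) an integer) has competitive ratio smaller than sqrt(m/k). Specifically, for every r, consider the adversary graph of r rounds, each round consisting of k·sqrt(m/k) independent tasks with CPU time sqrt(m/k) and GPU time 1, each task of round i+1 being a successor of the last-finishing task of round i; this graph forces any on-line algorithm to a makespan of about r·sqrt(m/k), while the off-line optimal makespan is asymptotically r, giving a ratio tending to sqrt(m/k). -/

import Mathlib

/-- A non-preemptive schedule of tasks (indexed by `ι`) on a heterogeneous
platform with `m` CPUs and `k` GPUs; task `j` takes time `pc j` on a CPU and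
`pg j` on a GPU. `cpu j = true` means `j` runs on CPU number `proc j`. -/
structure Sched (ι : Type) (m k : ℕ) (pc pg : ι → ℝ) where
  cpu : ι → Bool
  proc : ι → ℕ
  hproc : ∀ j, proc j < if cpu j then m else k
  start : ι → ℝ
  hstart : ∀ j, 0 ≤ start j
  disj : ∀ i j : ι, i ≠ j → cpu i = cpu j → proc i = proc j →
    start i + (if cpu i then pc i else pg i) ≤ start j ∨
    start j + (if cpu j then pc j else pg j) ≤ start i

/-- Processing time of task `j` on its assigned resource type. -/
def Sched.ptime {ι : Type} {m k : ℕ} {pc pg : ι → ℝ} (S : Sched ι m k pc pg)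
    (j : ι) : ℝ :=
  if S.cpu j then pc j else pg j

/-- Completion time of task `j`. -/
def Sched.finish {ι : Type} {m k : ℕ} {pc pg : ι → ℝ} (S : Sched ι m k pc pg)
    (j : ι) : ℝ :=
  S.start j + S.ptime j

/-- Processor `q` of type `b` (`true` = CPU) is busy at time `t`. -/
def Sched.busyAt {ι : Type} {m k : ℕ} {pc pg : ι → ℝ} (S : Sched ι m k pc pg)
    (b : Bool) (q : ℕ) (t : ℝ) : Prop :=
  ∃ j, S.cpu j = b ∧ S.proc j = q ∧ S.start j ≤ t ∧ t < S.finish j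

/-- Makespan: maximum completion time. -/
noncomputable def Sched.makespan {ι : Type} [Fintype ι] {m k : ℕ} {pc pg : ι → ℝ}
    (hne : Nonempty ι) (S : Sched ι m k pc pg) : ℝ :=
  Finset.univ.sup' (Finset.univ_nonempty_iff.mpr hne) S.finish

/-- List schedule: no processor (of either type) is idle while an
unstarted task remains. -/
def Sched.isList {ι : Type} {m k : ℕ} {pc pg : ι → ℝ}
    (S : Sched ι m k pc pg) : Prop :=
  ∀ t : ℝ, 0 ≤ t →
    (∃ (b : Bool) (q : ℕ), q < (if b then m else k) ∧ ¬ S.busyAt b q t) →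
    ∀ j, S.start j ≤ t

lemma chain_aux {ι : Type} [DecidableEq ι] (st : ι → ℝ) :
    ∀ (T : Finset ι) (hT : T.Nonempty),
    (∀ i ∈ T, ∀ j ∈ T, i ≠ j → st i + 1 ≤ st j ∨ st j + 1 ≤ st i) →
    T.inf' hT st + T.card ≤ T.sup' hT (fun j => st j + 1) := by
  intro T
  induction T using Finset.strongInduction with
  | _ T ih =>
    intro hT hd
    obtain ⟨j₀, hj₀T, hmax⟩ := T.exists_max_image st hT
    by_cases hT' : (T.erase j₀).Nonempty
    · have hsub : T.erase j₀ ⊂ T := Finset.erase_ssubset hj₀T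
      have IH := ih _ hsub hT' (fun a ha b hb hab =>
        hd a (Finset.mem_of_mem_erase ha) b (Finset.mem_of_mem_erase hb) hab)
      have hle : ∀ j ∈ T.erase j₀, st j + 1 ≤ st j₀ := by
        intro j hj
        have hne : j ≠ j₀ := Finset.ne_of_mem_erase hj
        rcases hd j (Finset.mem_of_mem_erase hj) j₀ hj₀T hne with h | h
        · exact h
        · exfalso
          have := hmax j (Finset.mem_of_mem_erase hj)
          linarith
      have hsup' : (T.erase j₀).sup' hT' (fun j => st j + 1) ≤ st j₀ :=
        Finset.sup'_le _ _ hle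
      obtain ⟨j₁, hj₁, hj₁e⟩ := Finset.exists_mem_eq_inf' hT' st
      have hinf : T.inf' hT st ≤ (T.erase j₀).inf' hT' st := by
        rw [hj₁e]; exact Finset.inf'_le st (Finset.mem_of_mem_erase hj₁)
      have hcard : ((T.erase j₀).card : ℝ) + 1 = T.card := by
        have h1 : 0 < T.card := Finset.card_pos.mpr hT
        have : (T.erase j₀).card + 1 = T.card := by
          rw [Finset.card_erase_of_mem hj₀T]; omega
        exact_mod_cast this
      have hfin : st j₀ + 1 ≤ T.sup' hT (fun j => st j + 1) :=
        Finset.le_sup' (fun j => st j + 1) hj₀T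
      linarith
    · have hcard : T.card = 1 := by
        rw [Finset.not_nonempty_iff_eq_empty] at hT'
        have := Finset.card_erase_of_mem hj₀T
        rw [hT'] at this
        simp at this
        have h1 : 0 < T.card := Finset.card_pos.mpr hT
        omega
      have h1 : T.inf' hT st ≤ st j₀ := Finset.inf'_le st hj₀T
      have h2 : st j₀ + 1 ≤ T.sup' hT (fun j => st j + 1) := Finset.le_sup' (fun j => st j + 1) hj₀T
      rw [hcard]; push_cast; linarith


/-- no on-line algorithm for precedence-constrained tasks on
`m = k·s²` CPUs and `k` GPUs (with `s = √(m/k)` an integer) is better than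
`s`-competitive.  The adversary instance has `r` rounds of `k·s` tasks
(CPU time `s`, GPU time `1`), where round `i+1` is revealed only after round
`i` completes: any on-line schedule (one where each round starts after the
previous one finishes) has makespan at least `r·s`, while an off-line schedule
respecting only the designated chain precedences achieves makespan at most
`r + s`; the ratio `r·s/(r+s)` forces every competitive ratio `ρ` to satisfy
`ρ ≥ s`. -/
theorem online_prec_lower_bound_sqrt
    (k s : ℕ) (hk : 0 < k) (hs : 0 < s) :
    (∀ r : ℕ, ∀ hr : 0 < r,
      (∀ S : Sched (Fin r × Fin (k * s)) (k * s ^ 2) k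
          (fun _ => (s : ℝ)) (fun _ => 1),
        (∀ (i : Fin r) (h : i.val + 1 < r) (j j' : Fin (k * s)),
          Sched.finish S (i, j) ≤ S.start (⟨i.val + 1, h⟩, j')) →
        (r : ℝ) * s ≤ Sched.makespan ⟨(⟨0, hr⟩, ⟨0, Nat.mul_pos hk hs⟩)⟩ S) ∧
      (∃ S : Sched (Fin r × Fin (k * s)) (k * s ^ 2) k
          (fun _ => (s : ℝ)) (fun _ => 1),
        (∀ (i : Fin r) (h : i.val + 1 < r) (j : Fin (k * s)),
          Sched.finish S (i, ⟨0, Nat.mul_pos hk hs⟩) ≤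
            S.start (⟨i.val + 1, h⟩, j)) ∧
        Sched.makespan ⟨(⟨0, hr⟩, ⟨0, Nat.mul_pos hk hs⟩)⟩ S ≤ (r : ℝ) + s)) ∧
    (∀ ρ : ℝ, (∀ r : ℕ, 0 < r → (r : ℝ) * s ≤ ρ * ((r : ℝ) + s)) →
      (s : ℝ) ≤ ρ) := by
  constructor
  · intro r hr
    have hks : 0 < k * s := Nat.mul_pos hk hs
    have hne2 : (Finset.univ : Finset (Fin (k * s))).Nonempty := ⟨⟨0, hks⟩, Finset.mem_univ _⟩
    constructor
    · -- on-line lower bound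
      intro S hprec
      set M : Fin r → ℝ := fun i => Finset.univ.sup' hne2 (fun j => S.finish (i, j)) with hM
      have round : ∀ (i : Fin r) (t : ℝ), (∀ j, t ≤ S.start (i, j)) → t + s ≤ M i := by
        intro i t ht
        by_cases hc : ∃ j, S.cpu (i, j) = true
        · obtain ⟨j, hj⟩ := hc
          have hfin : S.finish (i, j) = S.start (i, j) + s := by
            simp [Sched.finish, Sched.ptime, hj]
          have h1 : S.finish (i, j) ≤ M i :=
            Finset.le_sup' (fun j => S.finish (i, j)) (Finset.mem_univ j)
          have h2 := ht j
          rw [hfin] at h1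
          linarith
        · push_neg at hc
          have hcpu : ∀ j, S.cpu (i, j) = false := fun j => by
            simpa using hc j
          have hmaps : ∀ j ∈ (Finset.univ : Finset (Fin (k * s))),
              S.proc (i, j) ∈ Finset.range k := by
            intro j _
            rw [Finset.mem_range]
            have := S.hproc (i, j)
            rwa [hcpu j, if_neg (by simp)] at this
          have hcard : (Finset.range k).card * s ≤ (Finset.univ : Finset (Fin (k * s))).card := by
            simp
          obtain ⟨q, hq, hfib⟩ :=
            Finset.exists_le_card_fiber_of_mul_le_card_of_maps_to hmaps
              ⟨0, Finset.mem_range.mpr hk⟩ hcard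
          set T := Finset.univ.filter (fun j => S.proc (i, j) = q) with hT
          have hTne : T.Nonempty := Finset.card_pos.mp (lt_of_lt_of_le hs hfib)
          have hd : ∀ a ∈ T, ∀ b ∈ T, a ≠ b →
              S.start (i, a) + 1 ≤ S.start (i, b) ∨
              S.start (i, b) + 1 ≤ S.start (i, a) := by
            intro a ha b hb hab
            have hpa : S.proc (i, a) = q := (Finset.mem_filter.mp ha).2
            have hpb : S.proc (i, b) = q := (Finset.mem_filter.mp hb).2
            have hne' : (i, a) ≠ (i, b) := fun h => hab (congrArg Prod.snd h)
            have := S.disj (i, a) (i, b) hne' (by rw [hcpu a, hcpu b])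
              (by rw [hpa, hpb])
            simpa [hcpu a, hcpu b] using this
          have hchain := chain_aux (fun j => S.start (i, j)) T hTne hd
          have hinf : t ≤ T.inf' hTne (fun j => S.start (i, j)) :=
            Finset.le_inf' hTne _ (fun j _ => ht j)
          have hsup : T.sup' hTne (fun j => S.start (i, j) + 1) ≤ M i := by
            apply Finset.sup'_le
            intro j hj
            have hfj : S.finish (i, j) = S.start (i, j) + 1 := by
              simp [Sched.finish, Sched.ptime, hcpu j]
            rw [← hfj]
            exact Finset.le_sup' (fun j => S.finish (i, j)) (Finset.mem_univ j)
          have hcardR : (s : ℝ) ≤ T.card := by exact_mod_cast hfib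
          linarith
      have main : ∀ n (h : n < r), ((n : ℝ) + 1) * s ≤ M ⟨n, h⟩ := by
        intro n
        induction n with
        | zero =>
          intro h
          have h0 := round ⟨0, h⟩ 0 (fun j => S.hstart _)
          push_cast
          linarith
        | succ n ih =>
          intro h
          have hn : n < r := Nat.lt_of_succ_lt h
          have hMn := ih hn
          have hstep : ∀ j', M ⟨n, hn⟩ ≤ S.start (⟨n + 1, h⟩, j') := fun j' =>
            Finset.sup'_le _ _ (fun j _ => hprec ⟨n, hn⟩ h j j')
          have := round ⟨n + 1, h⟩ (M ⟨n, hn⟩) hstep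
          push_cast
          push_cast at hMn
          linarith
      have hlast := main (r - 1) (by omega)
      have hMle : M ⟨r - 1, by omega⟩ ≤
          Sched.makespan ⟨(⟨0, hr⟩, ⟨0, Nat.mul_pos hk hs⟩)⟩ S := by
        apply Finset.sup'_le
        intro j _
        exact Finset.le_sup' S.finish (Finset.mem_univ _)
      have hcast : ((r - 1 : ℕ) : ℝ) + 1 = (r : ℝ) := by
        have : (r - 1) + 1 = r := by omega
        exact_mod_cast this
      rw [hcast] at hlast
      linarith
    · -- off-line upper bound
      refine ⟨{
        cpu := fun p => decide (p.2.val ≠ 0)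
        proc := fun p => if p.2.val = 0 then 0 else (p.1.val % s) * (k * s) + p.2.val
        hproc := ?_
        start := fun p => if p.2.val = 0 then (p.1.val : ℝ) else (p.1.val : ℝ) + 1
        hstart := ?_
        disj := ?_ }, ?_, ?_⟩
      · intro p
        by_cases h : p.2.val = 0
        · simp [h, hk]
        · rw [if_neg h, if_pos (by simp [h])]
          calc (p.1.val % s) * (k * s) + p.2.val
              < (p.1.val % s) * (k * s) + k * s := by
                exact Nat.add_lt_add_left p.2.isLt _
            _ = (p.1.val % s + 1) * (k * s) := by ring
            _ ≤ s * (k * s) := Nat.mul_le_mul_right _ (Nat.mod_lt _ hs)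
            _ = k * s ^ 2 := by ring
      · intro p
        split <;> positivity
      · rintro ⟨i, j⟩ ⟨i', j'⟩ hne hcpu hpr
        by_cases hj : j.val = 0 <;> by_cases hj' : j'.val = 0
        · -- both on GPU
          have hjj : j = j' := Fin.ext (by omega)
          have hii : i.val ≠ i'.val := by
            intro h
            exact hne (Prod.ext (Fin.ext h) hjj)
          dsimp only
          rw [if_pos hj, if_pos hj', if_neg (by simp [hj]), if_neg (by simp [hj'])]
          rcases Nat.lt_or_ge i.val i'.val with h | h
          · left
            have h1 : i.val + 1 ≤ i'.val := h
            have h2 : (i.val : ℝ) + 1 ≤ (i'.val : ℝ) := by exact_mod_cast h1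
            linarith
          · right
            have hlt : i'.val < i.val := by omega
            have h1 : i'.val + 1 ≤ i.val := hlt
            have h2 : (i'.val : ℝ) + 1 ≤ (i.val : ℝ) := by exact_mod_cast h1
            linarith
        · exfalso; simp [hj, hj'] at hcpu
        · exfalso; simp [hj, hj'] at hcpu
        · -- both on CPU
          simp only [if_neg hj, if_neg hj'] at hpr
          have hjeq : j.val = j'.val := by
            have h1 := congrArg (fun x => x % (k * s)) hpr
            simp only [mul_comm _ (k * s), Nat.mul_add_mod,
              Nat.mod_eq_of_lt j.isLt, Nat.mod_eq_of_lt j'.isLt] at h1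
            exact h1
          have hmod : i.val % s = i'.val % s := by
            have h2 : (i.val % s) * (k * s) = (i'.val % s) * (k * s) := by omega
            exact Nat.eq_of_mul_eq_mul_right hks h2
          have hii : i.val ≠ i'.val := by
            intro h
            exact hne (Prod.ext (Fin.ext h) (Fin.ext hjeq))
          dsimp only
          rw [if_neg hj, if_neg hj', if_pos (by simp [hj]), if_pos (by simp [hj'])]
          rcases Nat.lt_or_ge i.val i'.val with h | h
          · left
            have hdvd : s ∣ i'.val - i.val := (Nat.modEq_iff_dvd' h.le).mp hmod
            have hles : s ≤ i'.val - i.val := Nat.le_of_dvd (by omega) hdvd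
            have : i.val + s ≤ i'.val := by omega
            have hc : (i.val : ℝ) + s ≤ (i'.val : ℝ) := by exact_mod_cast this
            linarith
          · right
            have hlt : i'.val < i.val := by omega
            have hdvd : s ∣ i.val - i'.val := (Nat.modEq_iff_dvd' hlt.le).mp hmod.symm
            have hles : s ≤ i.val - i'.val := Nat.le_of_dvd (by omega) hdvd
            have : i'.val + s ≤ i.val := by omega
            have hc : (i'.val : ℝ) + s ≤ (i.val : ℝ) := by exact_mod_cast this
            linarith
      · -- precedence of off-line schedule
        intro i h j
        simp only [Sched.finish, Sched.ptime]
        norm_num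
        split <;> push_cast <;> linarith
      · -- makespan bound
        apply Finset.sup'_le
        rintro ⟨i, j⟩ _
        simp only [Sched.finish, Sched.ptime]
        have hir : i.val + 1 ≤ r := i.isLt
        have hirR : (i.val : ℝ) + 1 ≤ (r : ℝ) := by exact_mod_cast hir
        have hsR : (0 : ℝ) ≤ s := Nat.cast_nonneg s
        by_cases hj : j.val = 0
        · rw [if_pos hj, if_neg (by simp [hj])]
          linarith
        · rw [if_neg hj, if_pos (by simp [hj])]
          linarith
  · -- ratio argument
    intro rho hrho
    by_contra hlt
    push_neg at hlt
    have hs1 : (1 : ℝ) ≤ s := by exact_mod_cast hs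
    have hspos : (0 : ℝ) < s - rho := by linarith
    obtain ⟨n, hn⟩ := exists_nat_gt (rho * s / (s - rho))
    have h := hrho (n + 1) (Nat.succ_pos n)
    push_cast at h
    have h2 : ((n : ℝ) + 1) * (s - rho) ≤ rho * s := by nlinarith
    have h3 : (n : ℝ) + 1 ≤ rho * s / (s - rho) := by
      rw [le_div_iff₀ hspos]
      linarith
    have h4 : (n : ℝ) ≤ n + 1 := by linarith
    linarith
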